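/- For n ≥ 1 and 1 ≤ i ≤ n−1, the product h_i · s_{(m+1,1^{n-i})} (with m ≥ 1) equals \sum_{x=0}^{min(m,i-1)} s_{(m+i-x, x+1, 1^{n-i})} + \sum_{x=0}^{min(m,i)} s_{(m+1+i-x, x+1, 1^{n-i-1})}. -/

import Mathlib

/-!
Let `D_l(λ; t)` be the `l × l` Jacobi–Trudi determinant of `λ` with its last column shifted
by `t`, so that `D_l(λ; 0) = s_λ`. When the last part of `λ` is `1`, the last row is
`(0, …, 0, 1, h_{1+t})`, and expanding along it gives
`D_{l+1}(λ; t) = h_{1+t} D_l(λ; 0) - D_l(λ; t+1)`. Every determinant in the identity has this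
shape, so the identity for all `t` passes from `l` to `l + 1` by linearity. For `l = 2` (one
trailing part `1`) each `3 × 3` and `2 × 2` term is a difference of consecutive terms of two
sequences of products of `h`'s, and the two sums telescope.
-/

open MvPolynomial Finset

noncomputable section

/-- The ring of symmetric functions, as the free polynomial ring generated by the
complete homogeneous symmetric functions `h₁, h₂, …` (variable `n` is `h_{n+1}`). -/
abbrev SymF := MvPolynomial ℕ ℤ

/-- The complete homogeneous symmetric function `h_n`, with `h_n = 0` for `n < 0`. -/
def hh : ℤ → SymF
  | Int.ofNat 0 => 1
  | Int.ofNat (n+1) => X n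
  | Int.negSucc _ => 0

/-- The Schur function `s_λ` for `λ = (lam 0, lam 1, …, lam (l-1))`, defined by the
Jacobi–Trudi determinant `det (h_{λ_i - i + j})₁≤i,j≤l`. -/
def schur (l : ℕ) (lam : Fin l → ℕ) : SymF :=
  Matrix.det (Matrix.of fun i j : Fin l => hh ((lam i : ℤ) + (j : ℤ) - (i : ℤ)))

/-- The elementary symmetric function `e_n = s_{(1^n)}`. -/
def ee (n : ℕ) : SymF := schur n (fun _ => 1)

/-- The skew Schur function `s_{λ/μ}`, via the Jacobi–Trudi determinant
`det (h_{λ_i - μ_j - i + j})`. -/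
def skewSchur (l : ℕ) (lam mu : Fin l → ℕ) : SymF :=
  Matrix.det (Matrix.of fun i j : Fin l =>
    hh ((lam i : ℤ) - (mu j : ℤ) + (j : ℤ) - (i : ℤ)))

open Matrix

theorem Matrix.det_succ_succ_of_last_row {R : Type*} [CommRing R] {n : ℕ}
    (A : Matrix (Fin (n + 2)) (Fin (n + 2)) R)
    (h : ∀ j : Fin n, A (Fin.last _) j.castSucc.castSucc = 0) :
    A.det = A (Fin.last _) (Fin.last _) * (A.submatrix Fin.castSucc Fin.castSucc).det
      - A (Fin.last _) (Fin.last n).castSucc *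
        (A.submatrix Fin.castSucc (Fin.last n).castSucc.succAbove).det := by
  rw [det_succ_row A (Fin.last _), Fin.sum_univ_castSucc, Fin.sum_univ_castSucc]
  simp only [Fin.val_last, Fin.val_castSucc, h, mul_zero, Fin.succAbove_last, zero_mul,
    Finset.sum_const_zero, odd_add_one_self, Odd.neg_one_pow, neg_mul, one_mul, zero_add,
    ← two_mul, even_two, Even.mul_right, Even.neg_pow, one_pow]
  ring

theorem hh_zero : hh 0 = 1 := rfl

theorem hh_of_neg {a : ℤ} (ha : a < 0) : hh a = 0 := by
  match a, ha with
  | Int.negSucc _, _ => rfl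

def shiftedJacobiTrudi (l : ℕ) (lam : ℕ → ℕ) (t : ℕ) : SymF :=
  det (of fun p q : Fin l => hh ((lam p : ℤ) + q - p + if (q : ℕ) = l - 1 then (t : ℤ) else 0))

def twoHead (a b p : ℕ) : ℕ := if p = 0 then a else if p = 1 then b else 1

theorem twoHead_of_two_le (a b : ℕ) {p : ℕ} (hp : 2 ≤ p) : twoHead a b p = 1 := by
  rw [twoHead, if_neg (by omega), if_neg (by omega)]

theorem schur_eq_shiftedJacobiTrudi (l : ℕ) (lam : ℕ → ℕ) :
    schur l (fun p => lam p) = shiftedJacobiTrudi l lam 0 := by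
  simp [schur, shiftedJacobiTrudi]

theorem schur_twoHead (l a b : ℕ) :
    schur l (fun p => if (p : ℕ) = 0 then a else if (p : ℕ) = 1 then b else 1) =
      shiftedJacobiTrudi l (twoHead a b) 0 :=
  schur_eq_shiftedJacobiTrudi l (twoHead a b)

theorem schur_hook (l a : ℕ) :
    schur l (fun p => if (p : ℕ) = 0 then a else 1) = shiftedJacobiTrudi l (twoHead a 1) 0 := by
  rw [← schur_twoHead]
  simp only [ite_self]

theorem shiftedJacobiTrudi_two (lam : ℕ → ℕ) (t : ℕ) :
    shiftedJacobiTrudi 2 lam t =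
      hh (lam 0) * hh (lam 1 + t) - hh (lam 0 + 1 + t) * hh (lam 1 - 1) := by
  simp [shiftedJacobiTrudi, det_fin_two]

theorem shiftedJacobiTrudi_succ_succ {n : ℕ} {lam : ℕ → ℕ} (hlam : lam (n + 1) = 1) (t : ℕ) :
    shiftedJacobiTrudi (n + 2) lam t =
      hh (1 + t) * shiftedJacobiTrudi (n + 1) lam 0 - shiftedJacobiTrudi (n + 1) lam (t + 1) := by
  set A : Matrix (Fin (n + 2)) (Fin (n + 2)) SymF :=
    of fun p q => hh (lam p + q - p + if (q : ℕ) = n + 2 - 1 then (t : ℤ) else 0)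
  have h_row : ∀ j : Fin n, A (Fin.last _) j.castSucc.castSucc = 0 := fun j => by
    simp only [A, of_apply, Fin.val_last, Fin.val_castSucc, hlam]
    rw [if_neg (by omega)]
    exact hh_of_neg (by omega)
  have h_corner : A (Fin.last _) (Fin.last _) = hh (1 + t) := by
    simp only [A, of_apply, Fin.val_last, hlam]
    rw [if_pos (by omega)]
    ring_nf
  have h_one : A (Fin.last _) (Fin.last n).castSucc = 1 := by
    simp only [A, of_apply, Fin.val_last, Fin.val_castSucc, hlam]
    rw [if_neg (by omega)]
    convert hh_zero using 2
    push_cast; ring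
  have h_minor_last :
      (A.submatrix Fin.castSucc Fin.castSucc).det = shiftedJacobiTrudi (n + 1) lam 0 := by
    refine congrArg det (ext fun p q => ?_)
    simp only [A, submatrix_apply, of_apply, Fin.val_castSucc]
    rw [if_neg (by omega)]
    simp
  have h_minor_prev : (A.submatrix Fin.castSucc (Fin.last n).castSucc.succAbove).det =
      shiftedJacobiTrudi (n + 1) lam (t + 1) := by
    refine congrArg det (ext fun p q => ?_)
    simp only [A, submatrix_apply, of_apply, Fin.val_castSucc]
    rcases lt_or_ge q (Fin.last n) with hq | hq
    · rw [Fin.succAbove_castSucc_of_lt _ _ hq]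
      have : (q : ℕ) < n := hq
      simp only [Fin.val_castSucc]
      rw [if_neg (by omega), if_neg (by omega)]
    · rw [Fin.succAbove_castSucc_of_le _ _ hq]
      have : (q : ℕ) = n := le_antisymm q.is_le hq
      simp only [Fin.val_succ]
      rw [if_pos (by omega), if_pos (by omega)]
      push_cast; ring_nf
  rw [shiftedJacobiTrudi, det_succ_succ_of_last_row A h_row, h_corner, h_one, h_minor_last,
    h_minor_prev, one_mul]

theorem shiftedJacobiTrudi_twoHead_succ (a b : ℕ) {l : ℕ} (hl : 2 ≤ l) (t : ℕ) :
    shiftedJacobiTrudi (l + 1) (twoHead a b) t =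
      hh (1 + t) * shiftedJacobiTrudi l (twoHead a b) 0
        - shiftedJacobiTrudi l (twoHead a b) (t + 1) := by
  obtain ⟨n, rfl⟩ := Nat.exists_eq_add_of_le' hl
  exact shiftedJacobiTrudi_succ_succ (twoHead_of_two_le a b (by omega)) t

theorem hh_mul_shiftedJacobiTrudi_two (m i : ℕ) (hi : 1 ≤ i) (t : ℕ) :
    hh i * shiftedJacobiTrudi 2 (twoHead (m + 1) 1) t =
      ∑ x ∈ range (min m (i - 1) + 1), shiftedJacobiTrudi 3 (twoHead (m + i - x) (x + 1)) t
        + ∑ x ∈ range (min m i + 1), shiftedJacobiTrudi 2 (twoHead (m + 1 + i - x) (x + 1)) t := by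
  set c : ℕ → ℤ := fun x => m + 1 + i - x
  set W : ℕ → SymF := fun x => hh (1 + t) * (hh (c x) * hh x) - hh (c x) * hh (x + 1 + t)
  set U : ℕ → SymF := fun x => hh (1 + t) * (hh (c x) * hh x) - hh (c x + 1 + t) * hh x
  have h_three : ∀ x ∈ range (min m (i - 1) + 1),
      shiftedJacobiTrudi 3 (twoHead (m + i - x) (x + 1)) t = W (x + 1) - U x := by
    intro x hx
    have : x ≤ m + i := by simp at hx; omega
    rw [shiftedJacobiTrudi_twoHead_succ _ _ le_rfl, shiftedJacobiTrudi_two, shiftedJacobiTrudi_two]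
    simp only [twoHead, W, U, c]
    push_cast [this]
    ring_nf
  have h_two : ∀ x ∈ range (min m i + 1),
      shiftedJacobiTrudi 2 (twoHead (m + 1 + i - x) (x + 1)) t = U x - W x := by
    intro x hx
    have : x ≤ m + 1 + i := by simp at hx; omega
    rw [shiftedJacobiTrudi_two]
    simp only [twoHead, W, U, c]
    push_cast [this]
    ring_nf
  have h_telescope (N : ℕ) :
      ∑ x ∈ range N, (W (x + 1) - U x) + ∑ x ∈ range N, (U x - W x) = W N := by
    have hW0 : W 0 = 0 := by simp [W, hh_zero, mul_comm]
    rw [← sum_add_distrib, ← sub_zero (W N), ← hW0, ← sum_range_sub W N]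
    exact sum_congr rfl fun x _ => by ring
  rw [sum_congr rfl h_three, sum_congr rfl h_two]
  rcases le_or_gt i m with him | him
  · rw [min_eq_right (by omega : i - 1 ≤ m), min_eq_right him, Nat.sub_add_cancel hi,
      sum_range_succ, ← add_assoc, h_telescope, shiftedJacobiTrudi_two]
    simp only [twoHead, ↓reduceIte, Nat.cast_add, Nat.cast_one, one_ne_zero, sub_self, hh_zero,
      mul_one, add_sub_cancel_right, sub_sub_sub_cancel_left, sub_add_sub_cancel, W, c, U]
    ring
  · rw [min_eq_left (by omega : m ≤ i - 1), min_eq_left him.le, h_telescope,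
      shiftedJacobiTrudi_two]
    simp only [twoHead, ↓reduceIte, Nat.cast_add, Nat.cast_one, one_ne_zero, sub_self, hh_zero,
      mul_one, add_sub_cancel_left, W, c]
    ring

theorem hh_mul_shiftedJacobiTrudi (m i : ℕ) (hi : 1 ≤ i) {k : ℕ} (hk : 1 ≤ k) (t : ℕ) :
    hh i * shiftedJacobiTrudi (k + 1) (twoHead (m + 1) 1) t =
      ∑ x ∈ range (min m (i - 1) + 1), shiftedJacobiTrudi (k + 2) (twoHead (m + i - x) (x + 1)) t
        + ∑ x ∈ range (min m i + 1),
            shiftedJacobiTrudi (k + 1) (twoHead (m + 1 + i - x) (x + 1)) t := by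
  induction k, hk using Nat.le_induction generalizing t with
  | base => exact hh_mul_shiftedJacobiTrudi_two m i hi t
  | succ k hk ih =>
    rw [shiftedJacobiTrudi_twoHead_succ _ _ (by omega : 2 ≤ k + 1)]
    simp only [shiftedJacobiTrudi_twoHead_succ _ _ (by omega : 2 ≤ k + 2) t,
      shiftedJacobiTrudi_twoHead_succ _ _ (by omega : 2 ≤ k + 1) t, sum_sub_distrib, ← mul_sum]
    linear_combination hh (1 + t) * ih 0 - ih (t + 1)

theorem stmt13_general (n m i : ℕ) (hi1 : 1 ≤ i) (hi2 : i ≤ n - 1) :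
    hh (i : ℤ) * schur (n - i + 1) (fun k => if (k : ℕ) = 0 then m + 1 else 1)
    = (∑ x ∈ Finset.range (min m (i-1) + 1),
        schur (n - i + 2)
          (fun k => if (k : ℕ) = 0 then m + i - x else if (k : ℕ) = 1 then x + 1 else 1))
      + ∑ x ∈ Finset.range (min m i + 1),
        schur (n - i + 1)
          (fun k => if (k : ℕ) = 0 then m + 1 + i - x else if (k : ℕ) = 1 then x + 1 else 1) := by
  simp only [schur_hook, schur_twoHead]
  exact hh_mul_shiftedJacobiTrudi m i hi1 (by omega : 1 ≤ n - i) 0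

/-- For `m ≥ 1`, `n ≥ 1` and `1 ≤ i ≤ n-1`,
`h_i · s_{(m+1,1^{n-i})} = ∑_{x=0}^{min(m,i-1)} s_{(m+i-x,x+1,1^{n-i})}
  + ∑_{x=0}^{min(m,i)} s_{(m+1+i-x,x+1,1^{n-i-1})}`. -/
theorem stmt13 (n m i : ℕ) (hm : 1 ≤ m) (hn : 1 ≤ n) (hi1 : 1 ≤ i) (hi2 : i ≤ n - 1) :
    hh (i : ℤ) * schur (n - i + 1) (fun k => if (k : ℕ) = 0 then m + 1 else 1)
    = (∑ x ∈ Finset.range (min m (i-1) + 1),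
        schur (n - i + 2)
          (fun k => if (k : ℕ) = 0 then m + i - x else if (k : ℕ) = 1 then x + 1 else 1))
      + ∑ x ∈ Finset.range (min m i + 1),
        schur (n - i + 1)
          (fun k => if (k : ℕ) = 0 then m + 1 + i - x else if (k : ℕ) = 1 then x + 1 else 1) :=
  stmt13_general n m i hi1 hi2
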